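/- Let d ≥ 1 and let L = {L_i}_{i=1}^{d²} be a measure basis for d×d complex matrices with all weights l_i = tr L_i strictly positive, with Gram matrix G (G_{ij} = tr(L_i L_j)) and bias matrix A = diag(l_1,…,l_{d²}). Define √Φ := A^{1/2}(A^{1/2}G^{-1}A^{1/2})^{1/2}A^{-1/2}, where (A^{1/2}G^{-1}A^{1/2})^{1/2} is the unique positive semidefinite square root of the positive definite real matrix A^{1/2}G^{-1}A^{1/2}. Then (√Φ)² = AG^{-1}, and the principal Wigner basis F = PW(L) satisfies F_i = Σ_j [√Φ]_{ij} L_j for all i. -/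

import Mathlib

open Matrix BigOperators
open scoped ComplexOrder Kronecker

/-- A measure basis: a linearly independent family of `d²` Hermitian `d×d` complex
matrices summing to the identity, with nonnegative traces. -/
def IsMeasureBasis {d : ℕ} (L : Fin (d ^ 2) → Matrix (Fin d) (Fin d) ℂ) : Prop :=
  (∀ i, (L i).IsHermitian) ∧ LinearIndependent ℝ L ∧ (∑ i, L i) = 1 ∧ ∀ i, 0 ≤ ((L i).trace).re

/-- A Wigner basis: an orthogonal measure basis. -/
def IsWignerBasis {d : ℕ} (L : Fin (d ^ 2) → Matrix (Fin d) (Fin d) ℂ) : Prop :=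
  IsMeasureBasis L ∧ ∀ i j, i ≠ j → (L i * L j).trace = 0

/-- The rescaled frame operator `S_L(X) = ∑ⱼ (tr(X Lⱼ)/lⱼ) Lⱼ`. -/
noncomputable def rsFrameOp {n : Type*} [Fintype n] {m : Type*} [Fintype m] [DecidableEq m]
    (L : n → Matrix m m ℂ) (X : Matrix m m ℂ) : Matrix m m ℂ :=
  ∑ j, (((X * L j).trace) / ((L j).trace)) • L j

/-- A map on matrices that is ℝ-linear, Hermiticity-preserving, self-adjoint with respect to
the Hilbert–Schmidt inner product on Hermitian matrices, and positive. -/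
def IsPosSelfAdjMap {m : Type*} [Fintype m]
    (T : Matrix m m ℂ → Matrix m m ℂ) : Prop :=
  IsLinearMap ℝ T ∧ (∀ X, X.IsHermitian → (T X).IsHermitian) ∧
  (∀ X Y, X.IsHermitian → Y.IsHermitian → (T X * Y).trace = (X * T Y).trace) ∧
  (∀ X, X.IsHermitian → 0 ≤ ((X * T X).trace).re)

/-- `T` is the (unique) positive self-adjoint inverse square root of the rescaled frame
operator of `L`, i.e. `S_L ∘ T ∘ T = id` on Hermitian matrices; `PW(L) i = T (L i)`. -/
def IsInvSqrtOfFrameOp {n : Type*} [Fintype n] {m : Type*} [Fintype m] [DecidableEq m]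
    (L : n → Matrix m m ℂ) (T : Matrix m m ℂ → Matrix m m ℂ) : Prop :=
  IsPosSelfAdjMap T ∧ ∀ X : Matrix m m ℂ, X.IsHermitian → rsFrameOp L (T (T X)) = X

/-!
Let `M` be the real matrix of `T` in the basis `L`, `T Lᵢ = ∑ⱼ Mᵢⱼ Lⱼ`; it exists because
`T Lᵢ = S_L (T³ Lᵢ)` and `S_L` takes values in the span of `L`. In coordinates the Hilbert–Schmidt
form is the Gram matrix `G`, so `S_L ∘ T² = id` reads `M² G = A`, while self-adjointness and
positivity of `T` say that `M G` is positive semidefinite. The matrix `√Φ` has the same two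
properties: `(√Φ)² G = A` and `√Φ G = A^{1/2} B⁻¹ A^{1/2} ⪰ 0`. Both `P = M G` and `P = √Φ G` are
thus positive solutions of `P G⁻¹ P = A`, which has only one: conjugating by `R = G^{-1/2}` turns
it into `(R P R)² = R A R`, and positive square roots are unique. Hence `M = √Φ`.
-/

namespace Matrix

variable {𝕜 n : Type*} [RCLike 𝕜] [Fintype n] [DecidableEq n]

open scoped MatrixOrder in
theorem PosSemidef.eq_of_mul_mul_eq {H P Q : Matrix n n 𝕜} (hH : H.PosDef)
    (hP : P.PosSemidef) (hQ : Q.PosSemidef) (h : P * H * P = Q * H * Q) : P = Q := by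
  set R := CFC.sqrt H
  have hRR : R * R = H := CFC.sqrt_mul_sqrt_self H hH.posSemidef.nonneg
  have hRH : Rᴴ = R := (CFC.sqrt_nonneg H).posSemidef.isHermitian.eq
  have hR : IsUnit R := isUnit_of_mul_isUnit_left (hRR ▸ hH.isUnit)
  have hconj : ∀ X : Matrix n n 𝕜, X.PosSemidef → 0 ≤ R * X * R := fun X hX =>
    (hRH ▸ hX.mul_mul_conjTranspose_same R).nonneg
  -- `R P R` and `R Q R` are positive square roots of `R (P H P) R`
  have hsq : ∀ X : Matrix n n 𝕜, (R * X * R) ^ 2 = R * (X * H * X) * R := fun X => by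
    simp only [sq, ← hRR, mul_assoc]
  have := (CFC.sq_eq_sq_iff _ _ (hconj P hP) (hconj Q hQ)).mp (by rw [hsq, hsq, h])
  exact hR.mul_left_cancel (hR.mul_right_cancel this)

theorem eq_of_mul_self_mul_eq {G N₁ N₂ : Matrix n n 𝕜} (hG : G.PosDef)
    (h₁ : (N₁ * G).PosSemidef) (h₂ : (N₂ * G).PosSemidef) (h : N₁ * N₁ * G = N₂ * N₂ * G) :
    N₁ = N₂ := by
  have hG' : IsUnit G := hG.isUnit
  have hcancel : ∀ N : Matrix n n 𝕜, N * G * G⁻¹ * (N * G) = N * N * G := fun N => by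
    rw [mul_nonsing_inv_cancel_right _ _ ((isUnit_iff_isUnit_det G).mp hG'), mul_assoc]
  exact hG'.mul_right_cancel (h₁.eq_of_mul_mul_eq hG.inv h₂ (by rw [hcancel, hcancel, h]))

theorem conj_mul_self_eq_of_mul_self_eq {P B H : Matrix n n 𝕜} (hP : IsUnit P)
    (hB : B * B = P * H * P) : P * B * P⁻¹ * (P * B * P⁻¹) = P * P * H := by
  have hPd := (isUnit_iff_isUnit_det P).mp hP
  calc P * B * P⁻¹ * (P * B * P⁻¹) = P * (B * B) * P⁻¹ := by
        simp only [mul_assoc, nonsing_inv_mul_cancel_left _ _ hPd]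
    _ = P * P * H := by rw [hB]; simp only [mul_assoc, mul_nonsing_inv _ hPd, mul_one]

theorem posSemidef_conj_mul_of_mul_self_eq {P B G : Matrix n n 𝕜} (hP : P.IsHermitian)
    (hPu : IsUnit P) (hG : IsUnit G) (hB : B.PosSemidef) (hBB : B * B = P * G⁻¹ * P) :
    (P * B * P⁻¹ * G).PosSemidef := by
  have hBu : IsUnit B :=
    isUnit_of_mul_isUnit_left (hBB ▸ (hPu.mul (isUnit_nonsing_inv_iff.mpr hG)).mul hPu)
  lift P to (Matrix n n 𝕜)ˣ using hPu
  lift B to (Matrix n n 𝕜)ˣ using hBu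
  lift G to (Matrix n n 𝕜)ˣ using hG
  have hBB' : B * B = P * G⁻¹ * P := Units.ext (by simpa using hBB)
  -- `G = P B⁻² P`, so `P B P⁻¹ G = P B⁻¹ P`
  have : P * B * P⁻¹ * G = P * B⁻¹ * P := by
    rw [show G = (P⁻¹ * (B * B) * P⁻¹)⁻¹ by rw [hBB']; group]
    group
  rw [← coe_units_inv, ← Units.val_mul, ← Units.val_mul, ← Units.val_mul, this]
  simpa [hP.eq] using hB.inv.conjTranspose_mul_mul_same (P : Matrix n n 𝕜)

end Matrix

section DiagonalSqrt

variable {n : Type*} [Fintype n] [DecidableEq n] {w : n → ℝ}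

theorem diagonal_sqrt_mul_self (hw : ∀ i, 0 ≤ w i) :
    diagonal (fun i => √(w i)) * diagonal (fun i => √(w i)) = diagonal w := by
  rw [diagonal_mul_diagonal]
  simp_rw [Real.mul_self_sqrt (hw _)]

theorem isUnit_diagonal_sqrt (hw : ∀ i, 0 < w i) : IsUnit (diagonal fun i => √(w i)) :=
  isUnit_diagonal.mpr (Pi.isUnit_iff.mpr fun i => (Real.sqrt_pos.mpr (hw i)).ne'.isUnit)

theorem inv_diagonal_sqrt (hw : ∀ i, 0 < w i) :
    (diagonal fun i => √(w i))⁻¹ = diagonal fun i => (√(w i))⁻¹ := by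
  refine inv_eq_left_inv ?_
  rw [diagonal_mul_diagonal]
  simp_rw [inv_mul_cancel₀ (Real.sqrt_pos.mpr (hw _)).ne']
  exact diagonal_one

end DiagonalSqrt

section HermitianFamily

variable {n m : Type*} [Fintype m]

def traceGram (L : n → Matrix m m ℂ) : Matrix n n ℝ :=
  Matrix.of fun i j => ((L i * L j).trace).re

theorem traceGram_isHermitian (L : n → Matrix m m ℂ) : (traceGram L).IsHermitian :=
  Matrix.IsHermitian.ext fun i j => by simp [traceGram, Matrix.trace_mul_comm (L i)]

theorem ofReal_re_trace_mul {X Y : Matrix m m ℂ} (hX : X.IsHermitian) (hY : Y.IsHermitian) :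
    ((X * Y).trace.re : ℂ) = (X * Y).trace :=
  Complex.conj_eq_iff_re.mp <| by
    rw [starRingEnd_apply, ← trace_conjTranspose, conjTranspose_mul, hX.eq, hY.eq,
      trace_mul_comm]

theorem re_trace_mul_self_pos {X : Matrix m m ℂ} (hX : X.IsHermitian) (h : X ≠ 0) :
    0 < (X * X).trace.re := by
  have hnonneg : 0 ≤ (Xᴴ * X).trace := (posSemidef_conjTranspose_mul_self X).trace_nonneg
  have hne : (Xᴴ * X).trace ≠ 0 := trace_conjTranspose_mul_self_eq_zero_iff.not.mpr h
  rw [hX.eq] at hnonneg hne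
  exact (Complex.pos_iff.mp (hnonneg.lt_of_ne hne.symm)).1

variable [Fintype n]

omit [Fintype m] in
theorem isHermitian_sum_smul {L : n → Matrix m m ℂ} (hL : ∀ i, (L i).IsHermitian) (x : n → ℝ) :
    (∑ i, x i • L i).IsHermitian :=
  isSelfAdjoint_sum _ fun i _ => ((hL i).smul (IsSelfAdjoint.all (x i))).isSelfAdjoint

theorem re_trace_sum_smul_mul (L : n → Matrix m m ℂ) (x : n → ℝ) (j : n) :
    ((∑ i, x i • L i) * L j).trace.re = (x ᵥ* traceGram L) j := by
  simp [Matrix.sum_mul, Matrix.trace_sum, Complex.re_sum, vecMul, dotProduct, traceGram]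

theorem re_trace_sum_smul_mul_sum_smul (L : n → Matrix m m ℂ) (x y : n → ℝ) :
    ((∑ i, x i • L i) * ∑ j, y j • L j).trace.re = x ᵥ* traceGram L ⬝ᵥ y := by
  simp [Matrix.mul_sum, Matrix.trace_sum, Complex.re_sum, ← re_trace_sum_smul_mul, dotProduct,
    mul_comm]

theorem traceGram_posDef {L : n → Matrix m m ℂ} (hL : ∀ i, (L i).IsHermitian)
    (hLI : LinearIndependent ℝ L) : (traceGram L).PosDef := by
  refine Matrix.posDef_iff_dotProduct_mulVec.mpr ⟨traceGram_isHermitian L, fun x hx => ?_⟩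
  have hX : ∑ i, x i • L i ≠ 0 := fun h0 =>
    hx (funext (Fintype.linearIndependent_iff.mp hLI x h0))
  simpa [dotProduct_mulVec, ← re_trace_sum_smul_mul_sum_smul] using
    re_trace_mul_self_pos (isHermitian_sum_smul hL x) hX

end HermitianFamily

section FrameOperator

variable {n m : Type*} [Fintype n] [Fintype m] [DecidableEq m] {L : n → Matrix m m ℂ}

theorem rsFrameOp_eq_sum_re (hL : ∀ i, (L i).IsHermitian) {Z : Matrix m m ℂ}
    (hZ : Z.IsHermitian) :
    rsFrameOp L Z = ∑ j, ((Z * L j).trace.re / (L j).trace.re) • L j := by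
  refine Finset.sum_congr rfl fun j _ => ?_
  have htr : (((L j).trace.re : ℝ) : ℂ) = (L j).trace := by
    simpa using ofReal_re_trace_mul (hL j) isHermitian_one
  rw [← ofReal_re_trace_mul hZ (hL j), ← htr, ← Complex.ofReal_div, Complex.coe_smul,
    Complex.ofReal_re, Complex.ofReal_re]

variable {T : Matrix m m ℂ → Matrix m m ℂ}

theorem IsInvSqrtOfFrameOp.exists_apply_eq_sum_smul (hL : ∀ i, (L i).IsHermitian)
    (hT : IsInvSqrtOfFrameOp L T) : ∃ M : Matrix n n ℝ, ∀ i, T (L i) = ∑ j, M i j • L j := by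
  obtain ⟨⟨-, hherm, -, -⟩, hinv⟩ := hT
  refine ⟨Matrix.of fun i j => (T (T (T (L i))) * L j).trace.re / (L j).trace.re, fun i => ?_⟩
  rw [← hinv _ (hherm _ (hL i)), rsFrameOp_eq_sum_re hL (hherm _ (hherm _ (hherm _ (hL i))))]
  rfl

end FrameOperator

section CoefficientMatrix

variable {n m : Type*} [Fintype n] [Fintype m] {L : n → Matrix m m ℂ}
  {T : Matrix m m ℂ → Matrix m m ℂ} {M : Matrix n n ℝ}

omit [Fintype m] in
theorem IsLinearMap.map_sum_smul_eq_vecMul (hT : IsLinearMap ℝ T)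
    (hM : ∀ i, T (L i) = ∑ j, M i j • L j) (x : n → ℝ) :
    T (∑ i, x i • L i) = ∑ j, (x ᵥ* M) j • L j := by
  change IsLinearMap.mk' T hT _ = _
  simp only [map_sum, _root_.map_smul, IsLinearMap.mk'_apply, hM, Finset.smul_sum, smul_smul,
    vecMul, dotProduct, Finset.sum_smul]
  exact Finset.sum_comm

theorem IsPosSelfAdjMap.posSemidef_mul_traceGram (hL : ∀ i, (L i).IsHermitian)
    (hT : IsPosSelfAdjMap T) (hM : ∀ i, T (L i) = ∑ j, M i j • L j) :
    (M * traceGram L).PosSemidef := by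
  obtain ⟨hlin, -, hadj, hpos⟩ := hT
  have hentry : ∀ i j, (T (L i) * L j).trace.re = (M * traceGram L) i j := fun i j => by
    rw [hM i, re_trace_sum_smul_mul]
    rfl
  refine .of_dotProduct_mulVec_nonneg (IsHermitian.ext fun i j => ?_) fun x => ?_
  · rw [star_trivial, ← hentry, ← hentry, hadj _ _ (hL i) (hL j), trace_mul_comm]
  · have hx := hpos _ (isHermitian_sum_smul hL x)
    rwa [trace_mul_comm, hlin.map_sum_smul_eq_vecMul hM, re_trace_sum_smul_mul_sum_smul,
      vecMul_vecMul, ← dotProduct_mulVec, ← star_trivial x] at hx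

variable [DecidableEq n] [DecidableEq m]

theorem IsInvSqrtOfFrameOp.mul_self_mul_traceGram (hL : ∀ i, (L i).IsHermitian)
    (hl : ∀ i, (L i).trace.re ≠ 0) (hLI : LinearIndependent ℝ L) (hT : IsInvSqrtOfFrameOp L T)
    (hM : ∀ i, T (L i) = ∑ j, M i j • L j) :
    M * M * traceGram L = diagonal fun i => (L i).trace.re := by
  obtain ⟨⟨hlin, -, -, -⟩, hinv⟩ := hT
  have hTT : ∀ i, T (T (L i)) = ∑ k, (M * M) i k • L k := fun i => by
    rw [hM i, hlin.map_sum_smul_eq_vecMul hM]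
    rfl
  ext i j
  have hS : rsFrameOp L (T (T (L i))) = L i := hinv _ (hL i)
  rw [hTT, rsFrameOp_eq_sum_re hL (isHermitian_sum_smul hL _)] at hS
  simp only [re_trace_sum_smul_mul, ← mul_apply_eq_vecMul] at hS
  have hcoeff := Fintype.linearIndependent_iffₛ.mp hLI
    (fun j => (M * M * traceGram L) i j / (L j).trace.re) (Pi.single i 1)
    (by simpa [Pi.single_apply] using hS) j
  rw [div_eq_iff (hl j)] at hcoeff
  rw [hcoeff, diagonal_apply]
  by_cases h : i = j <;> simp [h]

end CoefficientMatrix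

theorem sqrt_born_matrix_gives_pw {d : ℕ}
    (L : Fin (d ^ 2) → Matrix (Fin d) (Fin d) ℂ)
    (hL : IsMeasureBasis L) (hpos : ∀ i, 0 < ((L i).trace).re)
    (T : Matrix (Fin d) (Fin d) ℂ → Matrix (Fin d) (Fin d) ℂ)
    (hT : IsInvSqrtOfFrameOp L T)
    (G A Asq AsqInv B sqrtPhi : Matrix (Fin (d ^ 2)) (Fin (d ^ 2)) ℝ)
    (hG : ∀ i j, G i j = ((L i * L j).trace).re)
    (hA : A = Matrix.diagonal fun i => ((L i).trace).re)
    (hAsq : Asq = Matrix.diagonal fun i => Real.sqrt (((L i).trace).re))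
    (hAsqInv : AsqInv = Matrix.diagonal fun i => (Real.sqrt (((L i).trace).re))⁻¹)
    (hBpsd : B.PosSemidef) (hBsq : B * B = Asq * G⁻¹ * Asq)
    (hsqrtPhi : sqrtPhi = Asq * B * AsqInv) :
    sqrtPhi * sqrtPhi = A * G⁻¹ ∧
    ∀ i, T (L i) = ∑ j, (sqrtPhi i j) • L j := by
  obtain ⟨hHerm, hLI, -, -⟩ := hL
  obtain rfl : G = traceGram L := Matrix.ext hG
  have hGpd := traceGram_posDef hHerm hLI
  have hAsqU : IsUnit Asq := hAsq ▸ isUnit_diagonal_sqrt hpos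
  have hAsqInv' : AsqInv = Asq⁻¹ := by rw [hAsqInv, hAsq, inv_diagonal_sqrt hpos]
  have hAsqA : Asq * Asq = A := by rw [hAsq, hA, diagonal_sqrt_mul_self fun i => (hpos i).le]
  have hsq : sqrtPhi * sqrtPhi = A * (traceGram L)⁻¹ := by
    rw [hsqrtPhi, hAsqInv', conj_mul_self_eq_of_mul_self_eq hAsqU hBsq, hAsqA]
  obtain ⟨M, hM⟩ := hT.exists_apply_eq_sum_smul hHerm
  have hMeq : M = sqrtPhi := by
    refine eq_of_mul_self_mul_eq hGpd (hT.1.posSemidef_mul_traceGram hHerm hM) ?_ ?_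
    · rw [hsqrtPhi, hAsqInv']
      exact posSemidef_conj_mul_of_mul_self_eq (hAsq ▸ isHermitian_diagonal _) hAsqU
        hGpd.isUnit hBpsd hBsq
    · rw [hT.mul_self_mul_traceGram hHerm (fun i => (hpos i).ne') hLI hM, hsq, ← hA,
        nonsing_inv_mul_cancel_right _ _ ((isUnit_iff_isUnit_det _).mp hGpd.isUnit)]
  exact ⟨hsq, fun i => hMeq ▸ hM i⟩
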